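/- Let (V,⟨·,·⟩,J) be a para/pseudo-Hermitian vector space of dimension 4 with Kähler form Ω. For ψ ∈ Λ²V*, define Ξ(ψ)(x,y,z,w) := 2ψ(x,y)⟨z,w⟩ + ψ(x,z)⟨y,w⟩ - ψ(y,z)⟨x,w⟩ - ψ(x,w)⟨y,z⟩ + ψ(y,w)⟨x,z⟩. If Ξ(ψ) belongs to the space of Kähler–Weyl tensors (i.e., satisfies the Kähler identity Ξ(ψ)(x,y,Jz,Jw) = ∓Ξ(ψ)(x,y,z,w) in addition to the Weyl symmetries), then ψ is orthogonal to Ω. -/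

import Mathlib

/-!
Let `τ` be the metric trace of `ψ(·, J·)` and `Ω(x, y) = ⟨x, Jy⟩`. Contracting the
Kähler identity of `Ξ(ψ)` in its second and fourth arguments gives, in dimension 4,
`ψ(Jx, Jz) + ε ψ(x, z) = -τ Ω(x, z)`. Replacing `(x, z)` by `(Jx, Jz)` multiplies the
left side by `ε` and the right side by `-ε`, so `τ Ω = 0`; as `Ω ≠ 0`, `τ = 0`.
Finally `⟨ψ, Ω⟩ = -τ`.
-/

/-- `Ξ(ψ)(x,y,z,w) := 2ψ(x,y)⟨z,w⟩ + ψ(x,z)⟨y,w⟩ - ψ(y,z)⟨x,w⟩ - ψ(x,w)⟨y,z⟩ + ψ(y,w)⟨x,z⟩`. -/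
def XiOf {V : Type*} [AddCommGroup V] [Module ℝ V]
    (B ψ : V →ₗ[ℝ] V →ₗ[ℝ] ℝ) (x y z w : V) : ℝ :=
  2 * ψ x y * B z w + ψ x z * B y w - ψ y z * B x w - ψ x w * B y z + ψ y w * B x z

open Finset Matrix LinearMap.BilinForm

section MetricTrace

variable {ι V : Type*} [Fintype ι] [AddCommGroup V] [Module ℝ V]
  {B : LinearMap.BilinForm ℝ V} {b : Module.Basis ι ℝ V} {Ginv : Matrix ι ι ℝ}

/-- The trace of `β` for the metric whose inverse Gram matrix in the basis `b` is `Ginv`. -/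
noncomputable def metricTrace (b : Module.Basis ι ℝ V) (Ginv : Matrix ι ι ℝ)
    (β : V → V → ℝ) : ℝ :=
  ∑ j, ∑ l, Ginv j l * β (b j) (b l)

lemma metricTrace_add (β γ : V → V → ℝ) :
    metricTrace b Ginv (fun y w => β y w + γ y w)
      = metricTrace b Ginv β + metricTrace b Ginv γ := by
  simp only [metricTrace, mul_add, sum_add_distrib]

lemma metricTrace_sub (β γ : V → V → ℝ) :
    metricTrace b Ginv (fun y w => β y w - γ y w)
      = metricTrace b Ginv β - metricTrace b Ginv γ := by
  simp only [metricTrace, mul_sub, sum_sub_distrib]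

lemma metricTrace_neg (β : V → V → ℝ) :
    metricTrace b Ginv (fun y w => -β y w) = -metricTrace b Ginv β := by
  simp only [metricTrace, mul_neg, sum_neg_distrib]

lemma metricTrace_const_mul (c : ℝ) (β : V → V → ℝ) :
    metricTrace b Ginv (fun y w => c * β y w) = c * metricTrace b Ginv β := by
  simp only [metricTrace, mul_sum]
  exact sum_congr rfl fun _ _ => sum_congr rfl fun _ _ => by ring

lemma metricTrace_flip (hGinv : Ginv.IsSymm) (β : V → V → ℝ) :
    metricTrace b Ginv (fun y w => β w y) = metricTrace b Ginv β := by
  rw [metricTrace, sum_comm]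
  exact sum_congr rfl fun _ _ => sum_congr rfl fun _ _ => by rw [hGinv.apply]

lemma metricTrace_eq_zero_of_antisymm (hGinv : Ginv.IsSymm) {β : V → V → ℝ}
    (hβ : ∀ x y, β x y = -β y x) : metricTrace b Ginv β = 0 := by
  have h := metricTrace_flip (b := b) hGinv β
  rw [show (fun y w => β w y) = fun y w => -β y w from funext₂ fun y w => hβ w y,
    metricTrace_neg] at h
  linarith

variable [DecidableEq ι]

lemma isSymm_of_toMatrix_mul_eq_one (hB : ∀ x y, B x y = B y x)
    (hG : toMatrix b B * Ginv = 1) : Ginv.IsSymm := by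
  rw [← inv_eq_right_inv hG]
  exact IsSymm.inv ((isSymm_toMatrix_iff_isSymm b).2 (isSymm_def.2 hB))

lemma repr_eq_sum_mul_apply (hB : ∀ x y, B x y = B y x) (hG : toMatrix b B * Ginv = 1)
    (u : V) (j : ι) : b.repr u j = ∑ l, Ginv j l * B u (b l) := by
  have hrow (l : ι) : B u (b l) = (b.repr u ᵥ* toMatrix b B) l := by
    conv_lhs => rw [← b.sum_repr u]
    simp only [map_sum, map_smul, LinearMap.sum_apply, LinearMap.smul_apply, smul_eq_mul]
    simp [vecMul, dotProduct]
  simp_rw [hrow, ← (isSymm_of_toMatrix_mul_eq_one hB hG).apply j, mul_comm (Ginv _ _)]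
  calc b.repr u j = (b.repr u ᵥ* (toMatrix b B * Ginv)) j := by rw [hG, vecMul_one]
    _ = _ := by rw [← vecMul_vecMul]; rfl

lemma metricTrace_mul_apply (hB : ∀ x y, B x y = B y x) (hG : toMatrix b B * Ginv = 1)
    (f : V →ₗ[ℝ] ℝ) (u : V) : metricTrace b Ginv (fun y w => f y * B u w) = f u := by
  simp_rw [metricTrace, mul_left_comm (Ginv _ _), ← mul_sum, ← repr_eq_sum_mul_apply hB hG u]
  conv_rhs => rw [← b.sum_repr u]
  simp only [map_sum, map_smul, smul_eq_mul, mul_comm]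

lemma metricTrace_apply_mul (hB : ∀ x y, B x y = B y x) (hG : toMatrix b B * Ginv = 1)
    (f : V →ₗ[ℝ] ℝ) (u : V) : metricTrace b Ginv (fun y w => B u y * f w) = f u := by
  rw [← metricTrace_flip (isSymm_of_toMatrix_mul_eq_one hB hG)]
  simp_rw [mul_comm (B u _)]
  exact metricTrace_mul_apply hB hG f u

lemma metricTrace_self (hB : ∀ x y, B x y = B y x) (hG : toMatrix b B * Ginv = 1) :
    metricTrace b Ginv (fun y w => B y w) = Fintype.card ι := by
  simp [metricTrace, ← repr_eq_sum_mul_apply hB hG]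

lemma eq_zero_of_forall_apply_eq_zero (hB : ∀ x y, B x y = B y x)
    (hG : toMatrix b B * Ginv = 1) {v : V} (hv : ∀ w, B v w = 0) : v = 0 := by
  refine b.repr.injective (Finsupp.ext fun j => ?_)
  simp [repr_eq_sum_mul_apply hB hG, hv]

lemma sum_mul_apply_eq_metricTrace (hB : ∀ x y, B x y = B y x) (hG : toMatrix b B * Ginv = 1)
    (ψ : LinearMap.BilinForm ℝ V) (A : V →ₗ[ℝ] V) :
    ∑ i, ∑ j, ∑ k, ∑ l, Ginv i k * Ginv j l * ψ (b i) (b j) * B (b k) (A (b l))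
      = metricTrace b Ginv (fun y w => ψ (A w) y) := by
  have hinner (j l : ι) : ∑ i, ∑ k, Ginv i k * (ψ (b i) (b j) * B (A (b l)) (b k))
      = ψ (A (b l)) (b j) :=
    metricTrace_mul_apply hB hG (ψ.flip (b j)) (A (b l))
  simp_rw [metricTrace, ← hinner, mul_sum]
  rw [sum_comm]
  refine sum_congr rfl fun j _ => ?_
  conv_rhs => rw [sum_comm]
  refine sum_congr rfl fun i _ => ?_
  rw [sum_comm]
  refine sum_congr rfl fun l _ => sum_congr rfl fun k _ => ?_
  rw [hB (b k)]
  ring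

end MetricTrace

section Kahler

variable {ι V : Type*} [Fintype ι] [DecidableEq ι] [AddCommGroup V] [Module ℝ V]
  {B ψ : LinearMap.BilinForm ℝ V} {b : Module.Basis ι ℝ V} {Ginv : Matrix ι ι ℝ}
  {J : V →ₗ[ℝ] V} {ε : ℝ}

lemma apply_J_eq_neg_apply (hε : ε ≠ 0) (hJ2 : ∀ x, J (J x) = ε • x)
    (hJB : ∀ x y, B (J x) (J y) = -ε * B x y) (x y : V) : B x (J y) = -B (J x) y := by
  have h := hJB x (J y)
  rw [hJ2, map_smul, smul_eq_mul] at h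
  exact mul_left_cancel₀ hε (by linarith)

theorem kahler_contraction (hB : ∀ x y, B x y = B y x) (hG : toMatrix b B * Ginv = 1)
    (hε : ε ≠ 0) (hJ2 : ∀ x, J (J x) = ε • x) (hJB : ∀ x y, B (J x) (J y) = -ε * B x y)
    (hψ : ∀ x y, ψ x y = -ψ y x)
    (hK : ∀ x y z w, XiOf B ψ x y (J z) (J w) = -ε * XiOf B ψ x y z w) (x z : V) :
    ψ (J x) (J z) + (Fintype.card ι - 3) * ε * ψ x z
      = -metricTrace b Ginv (fun y w => ψ y (J w)) * B x (J z) := by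
  have hskew := apply_J_eq_neg_apply hε hJ2 hJB
  have hGs := isSymm_of_toMatrix_mul_eq_one hB hG
  -- the `2 ψ(x,y) ⟨z,w⟩` terms cancel; each remaining term has a known trace
  have hexpand : (fun y w => XiOf B ψ x y (J z) (J w) + ε * XiOf B ψ x y z w) =
      fun y w => ψ x (J z) * B y (J w) + ψ y (J z) * B (J x) w - B (J z) y * ψ x (J w)
        + B x (J z) * ψ y (J w) + ε * ψ x z * B y w - ε * (ψ y z * B x w)
        - ε * (B z y * ψ x w) + ε * B x z * ψ y w := by
    ext y w
    simp only [XiOf]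
    linear_combination 2 * ψ x y * hJB z w - ψ y (J z) * hskew x w
      - ψ x (J w) * hB y (J z) - ε * ψ x w * hB y z
  have h0 : metricTrace b Ginv (fun y w => XiOf B ψ x y (J z) (J w) + ε * XiOf B ψ x y z w)
      = 0 := by
    simp [hK, metricTrace]
  rw [hexpand] at h0
  simp only [metricTrace_add, metricTrace_sub, metricTrace_const_mul] at h0
  have hΩ : metricTrace b Ginv (fun y w => B y (J w)) = 0 :=
    metricTrace_eq_zero_of_antisymm hGs fun y w => by rw [hskew, hB]
  have hJxJz : metricTrace b Ginv (fun y w => ψ y (J z) * B (J x) w) = ψ (J x) (J z) :=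
    metricTrace_mul_apply hB hG (ψ.flip (J z)) (J x)
  have hxJJz : metricTrace b Ginv (fun y w => B (J z) y * ψ x (J w)) = ε * ψ x z := by
    calc _ = ψ x (J (J z)) := metricTrace_apply_mul hB hG ((ψ x).comp J) (J z)
      _ = ε * ψ x z := by rw [hJ2, map_smul, smul_eq_mul]
  have hxz : metricTrace b Ginv (fun y w => ψ y z * B x w) = ψ x z :=
    metricTrace_mul_apply hB hG (ψ.flip z) x
  have hzx : metricTrace b Ginv (fun y w => B z y * ψ x w) = ψ x z :=
    metricTrace_apply_mul hB hG (ψ x) z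
  rw [hΩ, hJxJz, hxJJz, metricTrace_self hB hG, hxz, hzx,
    metricTrace_eq_zero_of_antisymm hGs hψ] at h0
  linear_combination h0

lemma exists_apply_J_ne_zero [Nonempty ι] (hB : ∀ x y, B x y = B y x)
    (hG : toMatrix b B * Ginv = 1) (hε : ε ≠ 0) (hJ2 : ∀ x, J (J x) = ε • x) :
    ∃ x z, B x (J z) ≠ 0 := by
  obtain ⟨i⟩ := ‹Nonempty ι›
  have hJb : J (b i) ≠ 0 := fun h => by
    have h' := hJ2 (b i)
    rw [h, map_zero, eq_comm, smul_eq_zero] at h'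
    exact h'.elim hε (b.ne_zero i)
  by_contra! h
  exact hJb (eq_zero_of_forall_apply_eq_zero hB hG fun w => by rw [hB, h])

theorem metricTrace_comp_J_eq_zero (hcard : Fintype.card ι = 4) (hB : ∀ x y, B x y = B y x)
    (hG : toMatrix b B * Ginv = 1) (hε : ε ≠ 0) (hJ2 : ∀ x, J (J x) = ε • x)
    (hJB : ∀ x y, B (J x) (J y) = -ε * B x y) (hψ : ∀ x y, ψ x y = -ψ y x)
    (hK : ∀ x y z w, XiOf B ψ x y (J z) (J w) = -ε * XiOf B ψ x y z w) :
    metricTrace b Ginv (fun y w => ψ y (J w)) = 0 := by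
  set τ := metricTrace b Ginv (fun y w => ψ y (J w))
  have hC := kahler_contraction hB hG hε hJ2 hJB hψ hK (b := b) (Ginv := Ginv)
  rw [hcard] at hC
  norm_num at hC
  have : Nonempty ι := Fintype.card_pos_iff.1 (by omega)
  obtain ⟨x, z, hxz⟩ := exists_apply_J_ne_zero hB hG hε hJ2 (b := b)
  have h1 := hC x z
  have h2 := hC (J x) (J z)
  simp only [hJ2, map_smul, LinearMap.smul_apply, smul_eq_mul] at h2
  have hs := apply_J_eq_neg_apply hε hJ2 hJB x z
  have key : 2 * ε * (τ * B x (J z)) = 0 := by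
    linear_combination ε * h1 - h2 + ε * τ * hs
  simpa [hε, hxz] using key

end Kahler

theorem statement17_general {V : Type*} [AddCommGroup V] [Module ℝ V]
    (B : V →ₗ[ℝ] V →ₗ[ℝ] ℝ) (hBs : ∀ x y, B x y = B y x)
    (J : V →ₗ[ℝ] V) (ε : ℝ) (hε : ε = 1 ∨ ε = -1)
    (hJ2 : ∀ x, J (J x) = ε • x)
    (hJB : ∀ x y, B (J x) (J y) = -ε * B x y)
    (b : Module.Basis (Fin 4) ℝ V) (Ginv : Matrix (Fin 4) (Fin 4) ℝ)
    (hGinv : ∀ i j, (∑ k, B (b i) (b k) * Ginv k j) = if i = j then (1 : ℝ) else 0)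
    (ψ : V →ₗ[ℝ] V →ₗ[ℝ] ℝ) (hψ : ∀ x y, ψ x y = -ψ y x)
    (hK : ∀ x y z w, XiOf B ψ x y (J z) (J w) = -ε * XiOf B ψ x y z w) :
    (∑ i, ∑ j, ∑ k, ∑ l,
        Ginv i k * Ginv j l * ψ (b i) (b j) * B (b k) (J (b l))) = 0 := by
  have hG : toMatrix b B * Ginv = 1 := by
    ext i j
    simpa [Matrix.mul_apply, Matrix.one_apply] using hGinv i j
  have hε0 : ε ≠ 0 := by rcases hε with rfl | rfl <;> norm_num
  have hτ := metricTrace_comp_J_eq_zero (Fintype.card_fin 4) hBs hG hε0 hJ2 hJB hψ hK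
  simp_rw [sum_mul_apply_eq_metricTrace hBs hG ψ J, hψ (J _), metricTrace_neg, hτ, neg_zero]

/-- on a 4-dimensional para/pseudo-Hermitian vector space, if `Ξ(ψ)`
satisfies the Kähler identity `Ξ(ψ)(x,y,Jz,Jw) = -ε Ξ(ψ)(x,y,z,w)`, then `ψ` is
orthogonal to the Kähler form `Ω(x,y) = ⟨x,Jy⟩` (with respect to the inner product
induced on `Λ²` via the inverse Gram matrix of a basis). -/
theorem statement17 {V : Type*} [AddCommGroup V] [Module ℝ V]
    (B : V →ₗ[ℝ] V →ₗ[ℝ] ℝ) (hBs : ∀ x y, B x y = B y x)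
    (hBn : ∀ v, (∀ w, B v w = 0) → v = 0)
    (J : V →ₗ[ℝ] V) (ε : ℝ) (hε : ε = 1 ∨ ε = -1)
    (hJ2 : ∀ x, J (J x) = ε • x)
    (hJB : ∀ x y, B (J x) (J y) = -ε * B x y)
    (b : Module.Basis (Fin 4) ℝ V) (Ginv : Matrix (Fin 4) (Fin 4) ℝ)
    (hGinv : ∀ i j, (∑ k, B (b i) (b k) * Ginv k j) = if i = j then (1 : ℝ) else 0)
    (ψ : V →ₗ[ℝ] V →ₗ[ℝ] ℝ) (hψ : ∀ x y, ψ x y = -ψ y x)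
    (hK : ∀ x y z w, XiOf B ψ x y (J z) (J w) = -ε * XiOf B ψ x y z w) :
    (∑ i, ∑ j, ∑ k, ∑ l,
        Ginv i k * Ginv j l * ψ (b i) (b j) * B (b k) (J (b l))) = 0 :=
  statement17_general B hBs J ε hε hJ2 hJB b Ginv hGinv ψ hψ hK
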